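/- arXiv:2405.13598 — 2 statements merged into one kernel-verified Lean document; each statement's English description precedes it below -/
import Mathlib

section
/- Let 𝔖 be the Lie algebra over ℂ with underlying module the free ℂ[x]-module on generators E, F, H, with ℂ[x]-bilinear bracket determined by [H,E] = 2E, [H,F] = -2F, [E,F] = H⊗p, where p ∈ ℂ[x] is a fixed nonzero non-invertible polynomial (e.g. p = 4x³ - g₂x - g₃). Then 𝔖 is not perfect: the element H (= H⊗1) does not lie in the derived ideal [𝔖,𝔖]. In particular, 𝔖 is not isomorphic to sl₂(ℂ)⊗_ℂ A for any commutative unital ℂ-algebra A. -/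
open scoped TensorProduct Polynomial

/-! The `H`-coordinate taken modulo `p`, a `ℂ[x]`-linear map `𝔖 → ℂ[x] ⧸ (p)`, kills the brackets
of basis vectors (among them only `[E, F] = p H` has a nonzero `H`-coordinate), hence all brackets
by bilinearity. So it vanishes on `[𝔖, 𝔖]` but not on `H`, as `p` is not a unit. On the other hand,
`sl₂` is perfect once `2` is invertible (`h = [e, f]`, `2e = [h, e]`, `2f = [f, h]`),
`a ⊗ [x, y] = [a ⊗ x, 1 ⊗ y]` makes `A ⊗ sl₂` perfect, and perfectness passes along Lie
isomorphisms. -/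

section

variable {R L : Type*} [CommRing R] [LieRing L] [LieAlgebra R L]

section

variable {M : Type*} [AddCommGroup M] [Module R M]

theorem Module.Basis.map_lie_eq_zero {ι : Type*} (b : Module.Basis ι R L) (φ : L →ₗ[R] M)
    (h : ∀ i j, φ ⁅b i, b j⁆ = 0) (u v : L) : φ ⁅u, v⁆ = 0 := by
  have : LinearMap.mk₂ R (fun u v : L => φ ⁅u, v⁆) (fun _ _ _ => by rw [add_lie, map_add])
      (fun _ _ _ => by rw [smul_lie, map_smul]) (fun _ _ _ => by rw [lie_add, map_add])
      (fun _ _ _ => by rw [lie_smul, map_smul]) = 0 :=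
    b.ext fun i => b.ext fun j => h i j
  exact LinearMap.congr_fun₂ this u v

theorem LieIdeal.lie_top_top_le_ker (f : L →ₗ[R] M) (hf : ∀ u v : L, f ⁅u, v⁆ = 0) :
    (⁅(⊤ : LieIdeal R L), (⊤ : LieIdeal R L)⁆ : LieIdeal R L).toSubmodule ≤ LinearMap.ker f := by
  rw [LieSubmodule.lieIdeal_oper_eq_linear_span', Submodule.span_le]
  rintro _ ⟨u, -, v, -, rfl⟩
  exact hf u v

end

theorem LieIdeal.lie_top_top_eq_top_tensorProduct {A : Type*} [CommRing A] [Algebra R A]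
    (hL : ⁅(⊤ : LieIdeal R L), (⊤ : LieIdeal R L)⁆ = ⊤) :
    ⁅(⊤ : LieIdeal R (A ⊗[R] L)), (⊤ : LieIdeal R (A ⊗[R] L))⁆ = ⊤ := by
  set D := ⁅(⊤ : LieIdeal R (A ⊗[R] L)), (⊤ : LieIdeal R (A ⊗[R] L))⁆
  rw [eq_top_iff]
  rintro z -
  induction z using TensorProduct.induction_on with
  | zero => exact zero_mem D
  | add x y hx hy => exact add_mem hx hy
  | tmul a m =>
    have hm : m ∈ ⁅(⊤ : LieIdeal R L), (⊤ : LieIdeal R L)⁆ := by rw [hL]; trivial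
    rw [← LieSubmodule.mem_toSubmodule, LieSubmodule.lieIdeal_oper_eq_linear_span'] at hm
    induction hm using Submodule.span_induction with
    | mem _ hxy =>
      obtain ⟨x, -, y, -, rfl⟩ := hxy
      rw [← mul_one a, ← LieAlgebra.ExtendScalars.bracket_tmul]
      exact LieSubmodule.lie_mem_lie trivial trivial
    | zero => rw [TensorProduct.tmul_zero]; exact zero_mem D
    | add _ _ _ _ hx hy => rw [TensorProduct.tmul_add]; exact add_mem hx hy
    | smul r _ _ hx => rw [TensorProduct.tmul_smul]; exact D.smul_mem r hx

theorem LieIdeal.lie_top_top_eq_top_of_surjective {L' : Type*} [LieRing L'] [LieAlgebra R L']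
    (f : L →ₗ⁅R⁆ L') (hf : Function.Surjective f)
    (hL : ⁅(⊤ : LieIdeal R L), (⊤ : LieIdeal R L)⁆ = ⊤) :
    ⁅(⊤ : LieIdeal R L'), (⊤ : LieIdeal R L')⁆ = ⊤ := by
  have h := LieIdeal.map_bracket_eq f hf (I₁ := ⊤) (I₂ := ⊤)
  rw [hL, ← f.idealRange_eq_map, f.idealRange_eq_top_of_surjective hf] at h
  exact h.symm

end

namespace LieAlgebra.SpecialLinear

open Matrix

variable {R : Type*} [CommRing R]

theorem lie_single_single_fin_two :
    ⁅single (0 : Fin 2) 1 zero_ne_one (1 : R), single 1 0 one_ne_zero 1⁆ =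
      singleSubSingle (0 : Fin 2) 1 (1 : R) := by
  ext : 1
  simp [Ring.lie_def, single_mul_single_same]

theorem lie_singleSubSingle_single_zero_one :
    ⁅singleSubSingle (0 : Fin 2) 1 (1 : R), single 0 1 zero_ne_one 1⁆ =
      single (0 : Fin 2) 1 zero_ne_one (2 : R) := by
  ext : 1
  simp [Ring.lie_def, sub_mul, mul_sub, single_mul_single_same, single_mul_single_of_ne,
    ← single_add, one_add_one_eq_two]

theorem lie_single_singleSubSingle_one_zero :
    ⁅single (1 : Fin 2) 0 one_ne_zero (1 : R), singleSubSingle 0 1 1⁆ =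
      single (1 : Fin 2) 0 one_ne_zero (2 : R) := by
  ext : 1
  simp [Ring.lie_def, sub_mul, mul_sub, single_mul_single_same, single_mul_single_of_ne,
    ← single_add, one_add_one_eq_two]

theorem eq_singleSubSingle_add_single_add_single_fin_two (m : sl (Fin 2) R) :
    m = singleSubSingle 0 1 (m.val 0 0) + single 0 1 zero_ne_one (m.val 0 1) +
      single 1 0 one_ne_zero (m.val 1 0) := by
  have htr : m.val 1 1 = -m.val 0 0 := by
    have h : trace m.val = 0 := m.2
    rw [trace_fin_two] at h
    linear_combination h
  ext i j : 2
  fin_cases i <;> fin_cases j <;> simp [Matrix.single, htr]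

theorem lie_top_top_eq_top_of_isUnit_two (h2 : IsUnit (2 : R)) :
    ⁅(⊤ : LieIdeal R (sl (Fin 2) R)), (⊤ : LieIdeal R (sl (Fin 2) R))⁆ = ⊤ := by
  set D := ⁅(⊤ : LieIdeal R (sl (Fin 2) R)), (⊤ : LieIdeal R (sl (Fin 2) R))⁆
  have lie_mem (x y : sl (Fin 2) R) : ⁅x, y⁆ ∈ D := LieSubmodule.lie_mem_lie trivial trivial
  obtain ⟨u, hu⟩ := h2
  have half_mul_two (r : R) : (↑u⁻¹ * r) * 2 = r := by
    rw [mul_comm, ← hu, Units.mul_inv_cancel_left]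
  have mem_h (r : R) : singleSubSingle (0 : Fin 2) 1 r ∈ D := by
    rw [← mul_one r, ← smul_eq_mul, map_smul, ← lie_single_single_fin_two]
    exact D.smul_mem r (lie_mem _ _)
  have mem_e (r : R) : single (0 : Fin 2) 1 zero_ne_one r ∈ D := by
    rw [← half_mul_two r, ← smul_eq_mul, map_smul, ← lie_singleSubSingle_single_zero_one]
    exact D.smul_mem _ (lie_mem _ _)
  have mem_f (r : R) : single (1 : Fin 2) 0 one_ne_zero r ∈ D := by
    rw [← half_mul_two r, ← smul_eq_mul, map_smul, ← lie_single_singleSubSingle_one_zero]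
    exact D.smul_mem _ (lie_mem _ _)
  refine eq_top_iff.mpr fun m _ => ?_
  rw [eq_singleSubSingle_add_single_add_single_fin_two m]
  exact add_mem (add_mem (mem_h _) (mem_e _)) (mem_f _)

end LieAlgebra.SpecialLinear

theorem S_tau_not_perfect_general {L : Type*} [LieRing L] [LieAlgebra ℂ L]
    [Module (Polynomial ℂ) L] [IsScalarTower ℂ (Polynomial ℂ) L]
    (E F H : L) (b : Module.Basis (Fin 3) (Polynomial ℂ) L)
    (hb : b 0 = E ∧ b 1 = F ∧ b 2 = H)
    (hbil : ∀ (q : Polynomial ℂ) (u v : L), ⁅q • u, v⁆ = q • ⁅u, v⁆)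
    (p : Polynomial ℂ) (hpu : ¬ IsUnit p)
    (hHE : ⁅H, E⁆ = (2 : ℂ) • E) (hHF : ⁅H, F⁆ = (-2 : ℂ) • F)
    (hEF : ⁅E, F⁆ = p • H) :
    H ∉ ⁅(⊤ : LieIdeal ℂ L), (⊤ : LieIdeal ℂ L)⁆ ∧
    ∀ (A : Type*) [CommRing A] [Algebra ℂ A],
      ¬ ∃ e : L ≃ₗ[ℂ] (A ⊗[ℂ] LieAlgebra.SpecialLinear.sl (Fin 2) ℂ),
        ∀ u v : L, e ⁅u, v⁆ = ⁅e u, e v⁆ := by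
  obtain ⟨rfl, rfl, rfl⟩ := hb
  let _ : LieAlgebra ℂ[X] L :=
    { lie_smul q u v := by rw [← lie_skew, hbil, ← lie_skew u v, smul_neg] }
  let φ : L →ₗ[ℂ[X]] ℂ[X] ⧸ Ideal.span {p} := (Ideal.span {p}).mkQ ∘ₗ b.coord 2
  have φ_eq_zero_iff (u : L) : φ u = 0 ↔ p ∣ b.repr u 2 := by
    simp [φ, Ideal.Quotient.eq_zero_iff_dvd]
  have hφE : φ (b 0) = 0 := (φ_eq_zero_iff _).2 (by simp)
  have hφF : φ (b 1) = 0 := (φ_eq_zero_iff _).2 (by simp)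
  have hφpH : φ (p • b 2) = 0 := (φ_eq_zero_iff _).2 (by simp)
  have hφH : φ (b 2) ≠ 0 := by simpa [φ_eq_zero_iff, ← isUnit_iff_dvd_one]
  have hφ : ∀ u v, φ ⁅u, v⁆ = 0 := b.map_lie_eq_zero φ fun i j => by
    fin_cases i <;> fin_cases j <;>
      simp [← lie_skew (b 1) (b 0), ← lie_skew (b 0) (b 2), ← lie_skew (b 1) (b 2), hHE, hHF, hEF,
        hφE, hφF, hφpH]
  have hH : b 2 ∉ ⁅(⊤ : LieIdeal ℂ L), (⊤ : LieIdeal ℂ L)⁆ :=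
    fun h => hφH (LieIdeal.lie_top_top_le_ker (φ.restrictScalars ℂ) hφ h)
  refine ⟨hH, fun A _ _ ⟨e, he⟩ => hH ?_⟩
  let e' : L ≃ₗ⁅ℂ⁆ A ⊗[ℂ] LieAlgebra.SpecialLinear.sl (Fin 2) ℂ := { e with map_lie' := he _ _ }
  have hsl := LieAlgebra.SpecialLinear.lie_top_top_eq_top_of_isUnit_two (R := ℂ) two_ne_zero.isUnit
  rw [LieIdeal.lie_top_top_eq_top_of_surjective e'.symm.toLieHom e'.symm.surjective
    (LieIdeal.lie_top_top_eq_top_tensorProduct hsl)]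
  trivial

/-- Let `𝔖` be a complex Lie algebra which is a free `ℂ[x]`-module with basis
`E, F, H`, with `ℂ[x]`-bilinear bracket determined by `[H,E] = 2E`,
`[H,F] = -2F`, `[E,F] = p•H` for a fixed nonzero non-invertible polynomial `p`.
Then `𝔖` is not perfect: `H` does not lie in the derived ideal `[𝔖,𝔖]`. In
particular `𝔖` is not isomorphic (as a Lie algebra over `ℂ`) to
`sl₂(ℂ) ⊗ A` for any commutative unital `ℂ`-algebra `A`. -/
theorem S_tau_not_perfect {L : Type*} [LieRing L] [LieAlgebra ℂ L]
    [Module (Polynomial ℂ) L] [IsScalarTower ℂ (Polynomial ℂ) L]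
    (E F H : L) (b : Module.Basis (Fin 3) (Polynomial ℂ) L)
    (hb : b 0 = E ∧ b 1 = F ∧ b 2 = H)
    (hbil : ∀ (q : Polynomial ℂ) (u v : L), ⁅q • u, v⁆ = q • ⁅u, v⁆)
    (p : Polynomial ℂ) (hp0 : p ≠ 0) (hpu : ¬ IsUnit p)
    (hHE : ⁅H, E⁆ = (2 : ℂ) • E) (hHF : ⁅H, F⁆ = (-2 : ℂ) • F)
    (hEF : ⁅E, F⁆ = p • H) :
    H ∉ ⁅(⊤ : LieIdeal ℂ L), (⊤ : LieIdeal ℂ L)⁆ ∧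
    ∀ (A : Type*) [CommRing A] [Algebra ℂ A],
      ¬ ∃ e : L ≃ₗ[ℂ] (A ⊗[ℂ] LieAlgebra.SpecialLinear.sl (Fin 2) ℂ),
        ∀ u v : L, e ⁅u, v⁆ = ⁅e u, e v⁆ :=
  S_tau_not_perfect_general E F H b hb hbil p hpu hHE hHF hEF
end

section
/- Let p ∈ ℂ[x] be a polynomial of degree 3 and let 𝔖 be the Lie algebra that is the free ℂ[x]-module on E, F, H with ℂ[x]-bilinear bracket [H,E] = 2E, [H,F] = -2F, [E,F] = H⊗p. Then the abelianisation 𝔖/[𝔖,𝔖] is isomorphic as a ℂ-vector space to ℂ[x]/(p), and hence has dimension 3 over ℂ. -/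
/-!
The bracket is `A`-bilinear and among the brackets of basis vectors only `⁅e, f⁆ = p h` has an
`h`-component, so the `h`-coordinate taken modulo `p` vanishes on `[𝔖, 𝔖]`. Conversely, `2` being
invertible, `e = ⁅h/2, e⁆` and `f = ⁅-h/2, f⁆` are commutators, and so is `q p h = ⁅q e, f⁆`; hence
`[𝔖, 𝔖]` is exactly the kernel of the surjection `𝔖 → A/(p)` given by that coordinate.
-/

open Polynomial

/-- `b 0, b 1, b 2` play the roles of `e, f, h`. -/
structure IsTwistedSl2Basis {A L : Type*} [CommRing A] [LieRing L] [Module A L]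
    (b : Module.Basis (Fin 3) A L) (p : A) : Prop where
  smul_lie : ∀ (q : A) (u v : L), ⁅q • u, v⁆ = q • ⁅u, v⁆
  lie_h_e : ⁅b 2, b 0⁆ = (2 : A) • b 0
  lie_h_f : ⁅b 2, b 1⁆ = (-2 : A) • b 1
  lie_e_f : ⁅b 0, b 1⁆ = p • b 2

section

variable {A L : Type*} [CommRing A] [AddCommGroup L] [Module A L]

noncomputable def hCoordMod (b : Module.Basis (Fin 3) A L) (p : A) : L →ₗ[A] A ⧸ Ideal.span {p} :=
  (Ideal.span {p}).mkQ ∘ₗ b.coord 2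

theorem hCoordMod_surjective (b : Module.Basis (Fin 3) A L) (p : A) :
    Function.Surjective (hCoordMod b p) := by
  intro y
  obtain ⟨q, rfl⟩ := Ideal.Quotient.mk_surjective y
  exact ⟨q • b 2, by simp [hCoordMod, Algebra.smul_def]⟩

theorem hCoordMod_eq_zero_iff {b : Module.Basis (Fin 3) A L} {p : A} {x : L} :
    hCoordMod b p x = 0 ↔ p ∣ b.repr x 2 := by
  rw [hCoordMod, LinearMap.comp_apply, Submodule.mkQ_apply, Submodule.Quotient.mk_eq_zero,
    Ideal.mem_span_singleton, Module.Basis.coord_apply]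

end

namespace IsTwistedSl2Basis

variable {A L : Type*} [CommRing A] [LieRing L] [Module A L]
  {b : Module.Basis (Fin 3) A L} {p : A}

theorem lie_smul (hb : IsTwistedSl2Basis b p) (q : A) (u v : L) :
    ⁅u, q • v⁆ = q • ⁅u, v⁆ := by
  rw [← lie_skew, hb.smul_lie, ← smul_neg, lie_skew]

theorem repr_lie_two (hb : IsTwistedSl2Basis b p) (u v : L) :
    b.repr ⁅u, v⁆ 2 = (b.repr u 0 * b.repr v 1 - b.repr u 1 * b.repr v 0) * p := by
  have hhe := hb.lie_h_e
  have hhf := hb.lie_h_f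
  have hef := hb.lie_e_f
  have heh : ⁅b 0, b 2⁆ = -((2 : A) • b 0) := by rw [← lie_skew, hhe]
  have hfh : ⁅b 1, b 2⁆ = -((-2 : A) • b 1) := by rw [← lie_skew, hhf]
  have hfe : ⁅b 1, b 0⁆ = -(p • b 2) := by rw [← lie_skew, hef]
  conv_lhs => rw [← b.sum_repr u, ← b.sum_repr v]
  simp only [Fin.sum_univ_three, add_lie, lie_add, hb.smul_lie, hb.lie_smul, lie_self,
    smul_zero, hhe, hhf, hef, heh, hfh, hfe, smul_neg, map_add, map_neg, map_smul,
    Finsupp.add_apply, Finsupp.neg_apply, Finsupp.smul_apply, b.repr_self,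
    Finsupp.single_apply, smul_eq_mul,
    ↓reduceIte, Fin.reduceEq, mul_one, zero_add, mul_zero, add_zero, mul_neg, neg_zero]
  ring

variable {K : Type*} [CommRing K] [Algebra K A] [LieAlgebra K L] [IsScalarTower K A L]

theorem derivedIdeal_eq_ker (hb : IsTwistedSl2Basis b p) (h2 : IsUnit (2 : A)) :
    (⁅(⊤ : LieIdeal K L), (⊤ : LieIdeal K L)⁆ : LieIdeal K L).toSubmodule =
      (LinearMap.ker (hCoordMod b p)).restrictScalars K := by
  apply le_antisymm
  · rw [LieSubmodule.lieIdeal_oper_eq_linear_span]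
    refine Submodule.span_le.2 ?_
    rintro - ⟨u, v, rfl⟩
    simp [hCoordMod_eq_zero_iff, hb.repr_lie_two]
  · intro x hx
    have mem : ∀ u v : L, ⁅u, v⁆ ∈ ⁅(⊤ : LieIdeal K L), ⊤⁆ := fun u v =>
      LieSubmodule.lie_mem_lie (LieSubmodule.mem_top u) (LieSubmodule.mem_top v)
    obtain ⟨c, hc⟩ := h2.exists_left_inv
    obtain ⟨q, hq⟩ := hCoordMod_eq_zero_iff.1 hx
    have he : b.repr x 0 • b 0 = ⁅(b.repr x 0 * c) • b 2, b 0⁆ := by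
      rw [hb.smul_lie, hb.lie_h_e, smul_smul, mul_assoc, hc, mul_one]
    have hf : b.repr x 1 • b 1 = ⁅(-(b.repr x 1 * c)) • b 2, b 1⁆ := by
      rw [hb.smul_lie, hb.lie_h_f, smul_smul, neg_mul_neg, mul_assoc, hc, mul_one]
    have hh : b.repr x 2 • b 2 = ⁅q • b 0, b 1⁆ := by
      rw [hb.smul_lie, hb.lie_e_f, smul_smul, hq, mul_comm]
    rw [← b.sum_repr x, Fin.sum_univ_three, he, hf, hh]
    exact add_mem (add_mem (mem _ _) (mem _ _)) (mem _ _)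

noncomputable def abelianizationEquiv (hb : IsTwistedSl2Basis b p) (h2 : IsUnit (2 : A)) :
    (L ⧸ ⁅(⊤ : LieIdeal K L), (⊤ : LieIdeal K L)⁆) ≃ₗ[K] A ⧸ Ideal.span {p} :=
  (Submodule.quotEquivOfEq _ _ (hb.derivedIdeal_eq_ker h2)).trans
    (((hCoordMod b p).restrictScalars K).quotKerEquivOfSurjective (hCoordMod_surjective b p))

end IsTwistedSl2Basis

/-- Let `p ∈ ℂ[x]` have degree 3 and let `𝔖` be a complex Lie algebra which is
a free `ℂ[x]`-module on `E, F, H` with `ℂ[x]`-bilinear bracket `[H,E] = 2E`,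
`[H,F] = -2F`, `[E,F] = p•H`. Then the abelianisation `𝔖/[𝔖,𝔖]` is isomorphic
as a `ℂ`-vector space to `ℂ[x]/(p)`, and hence is 3-dimensional over `ℂ`. -/
theorem S_tau_abelianisation {L : Type*} [LieRing L] [LieAlgebra ℂ L]
    [Module (Polynomial ℂ) L] [IsScalarTower ℂ (Polynomial ℂ) L]
    (E F H : L) (b : Module.Basis (Fin 3) (Polynomial ℂ) L)
    (hb : b 0 = E ∧ b 1 = F ∧ b 2 = H)
    (hbil : ∀ (q : Polynomial ℂ) (u v : L), ⁅q • u, v⁆ = q • ⁅u, v⁆)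
    (p : Polynomial ℂ) (hp : p.degree = 3)
    (hHE : ⁅H, E⁆ = (2 : ℂ) • E) (hHF : ⁅H, F⁆ = (-2 : ℂ) • F)
    (hEF : ⁅E, F⁆ = p • H) :
    Nonempty ((L ⧸ ⁅(⊤ : LieIdeal ℂ L), (⊤ : LieIdeal ℂ L)⁆) ≃ₗ[ℂ]
      (Polynomial ℂ ⧸ Ideal.span {p})) ∧
    Module.finrank ℂ (L ⧸ ⁅(⊤ : LieIdeal ℂ L), (⊤ : LieIdeal ℂ L)⁆) = 3 := by
  obtain ⟨rfl, rfl, rfl⟩ := hb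
  have hS : IsTwistedSl2Basis b p :=
    { smul_lie := hbil
      lie_h_e := by rw [hHE, ← algebraMap_smul (Polynomial ℂ), map_ofNat]
      lie_h_f := by rw [hHF, ← algebraMap_smul (Polynomial ℂ), map_neg, map_ofNat]
      lie_e_f := hEF }
  have h2 : IsUnit (2 : Polynomial ℂ) := by
    rw [← map_ofNat C 2]
    exact isUnit_C.2 (IsUnit.mk0 2 two_ne_zero)
  let e := hS.abelianizationEquiv (K := ℂ) h2
  refine ⟨⟨e⟩, ?_⟩
  rw [e.finrank_eq, finrank_quotient_span_eq_natDegree, natDegree_eq_of_degree_eq_some hp]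
end
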